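/- arXiv:1806.09391 — 3 statements merged into one kernel-verified Lean document; each statement's English description precedes it below -/
import Mathlib

section
/- Let a, y be nonzero complex numbers and set x = (y²·a)⁻¹, u = y²·a, v = (y·a)⁻¹, β = -(y³·a)⁻¹ - y³·a², and τ = a³·y⁶ + 1 + (a³·y⁶)⁻¹. Then all of the following equations hold: x·u = 1; y·v·β = -(x·v + u·y); y·v·a = 1; x·u·τ + (x·v + u·y)·β + y·v·a = 0; x² + x·y·β + y²·a = 0; u = y²·a; and v = x·y. (This is the existence half of the classification of separating SU(3)-state functions: every pair of nonzero parameters a, y yields a consistent solution of all the Reidemeister-move equations.) -/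
/-- Existence half of the classification of separating SU(3)-state functions:
for every pair of nonzero parameters `a`, `y`, setting `x = (y²·a)⁻¹`,
`u = y²·a`, `v = (y·a)⁻¹`, `β = -(y³·a)⁻¹ - y³·a²`, and
`τ = a³·y⁶ + 1 + (a³·y⁶)⁻¹`, all of the Reidemeister-move equations hold. -/
theorem su3_state_function_exists (a y : ℂ) (ha : a ≠ 0) (hy : y ≠ 0) :
    let x := (y ^ 2 * a)⁻¹
    let u := y ^ 2 * a
    let v := (y * a)⁻¹
    let β := -(y ^ 3 * a)⁻¹ - y ^ 3 * a ^ 2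
    let τ := a ^ 3 * y ^ 6 + 1 + (a ^ 3 * y ^ 6)⁻¹
    x * u = 1 ∧
    y * v * β = -(x * v + u * y) ∧
    y * v * a = 1 ∧
    x * u * τ + (x * v + u * y) * β + y * v * a = 0 ∧
    x ^ 2 + x * y * β + y ^ 2 * a = 0 ∧
    u = y ^ 2 * a ∧
    v = x * y := by
  refine ⟨?_, ?_, ?_, ?_, ?_, rfl, ?_⟩ <;> field_simp <;> ring_nf <;> simp [← inv_pow, mul_assoc, mul_comm, mul_left_comm, ha, hy] <;> field_simp <;> ring
end

section
/- Let x, y, u, v, a, β ∈ ℂ satisfy x·u = 1, y·v·a = 1, u = y²·a, v = x·y, and y·v·β = -(x·v + u·y). Then x² + x·y·β + y²·a = 0. (That is, in the system of equations governing an SU(3)-state function, the equation x² + x·y·β + y²·a = 0 is redundant: it follows from the remaining equations.) -/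
/-- Redundancy of the square equation: if `x·u = 1`, `y·v·a = 1`, `u = y²·a`,
`v = x·y`, and `y·v·β = -(x·v + u·y)`, then `x² + x·y·β + y²·a = 0`. -/
theorem su3_square_equation_redundant (x y u v a β : ℂ)
    (h1 : x * u = 1) (h2 : y * v * a = 1) (h3 : u = y ^ 2 * a)
    (h4 : v = x * y) (h5 : y * v * β = -(x * v + u * y)) :
    x ^ 2 + x * y * β + y ^ 2 * a = 0 := by
  have hy : y ≠ 0 := by
    intro h
    rw [h] at h2
    simp at h2
  have key : y * (x ^ 2 + x * y * β + y ^ 2 * a) = 0 := by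
    subst h3 h4
    linear_combination h5
  rcases mul_eq_zero.mp key with h | h
  · exact absurd h hy
  · exact h
end

section
/- Let x, y, u, v, a, β, τ ∈ ℂ satisfy x·u = 1, y·v·β = -(x·v + u·y), y·v·a = 1, x·u·τ + (x·v + u·y)·β + y·v·a = 0, u = y²·a, and v = x·y. Then y ≠ 0, a ≠ 0, and the solution is completely determined by a and y: x = (y²·a)⁻¹, u = y²·a, v = (y·a)⁻¹, β = -(y³·a)⁻¹ - y³·a², and τ = a³·y⁶ + 1 + (a³·y⁶)⁻¹. (This is the uniqueness half of the classification: every separating SU(3)-state function belongs to the two-parameter family indexed by nonzero a and y.) -/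
/-!
Substituting `u = y²a` and `v = xy`, the equation `xu = 1` reads `x · y²a = 1`, so `y` and `a`
are units and `x`, `v` are determined. Writing `s = xv + uy`, the equations `yva = 1` and
`yvβ = -s` give `β = -as`, and `xu = yva = 1` turns the last equation into `τ = -sβ - 1 = as² - 1`;
expanding `s = (y³a²)⁻¹ + y³a` yields the stated formulas.
-/

section

variable {K : Type*} [Field K]

theorem crossing_coeffs_eq {x y u v a : K} (hxu : x * u = 1) (hu : u = y ^ 2 * a)
    (hv : v = x * y) : y ≠ 0 ∧ a ≠ 0 ∧ x = (y ^ 2 * a)⁻¹ ∧ v = (y * a)⁻¹ := by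
  rw [hu] at hxu
  obtain ⟨hy, ha⟩ : y ≠ 0 ∧ a ≠ 0 := by simpa using right_ne_zero_of_mul_eq_one hxu
  have hx : x = (y ^ 2 * a)⁻¹ := eq_inv_of_mul_eq_one_left hxu
  refine ⟨hy, ha, hx, ?_⟩
  rw [hv, hx]
  field_simp

theorem bubble_eq_neg_mul {y v a β s : K} (hyva : y * v * a = 1) (h : y * v * β = -s) :
    β = -a * s := by
  linear_combination a * h - β * hyva

end

/-- Uniqueness half of the classification of separating SU(3)-state functions:
the Reidemeister-move equations force `y ≠ 0`, `a ≠ 0`, and determine the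
solution completely in terms of `a` and `y`. -/
theorem su3_state_function_unique (x y u v a β τ : ℂ)
    (h1 : x * u = 1) (h2 : y * v * β = -(x * v + u * y)) (h3 : y * v * a = 1)
    (h4 : x * u * τ + (x * v + u * y) * β + y * v * a = 0)
    (h5 : u = y ^ 2 * a) (h6 : v = x * y) :
    y ≠ 0 ∧ a ≠ 0 ∧
    x = (y ^ 2 * a)⁻¹ ∧ u = y ^ 2 * a ∧ v = (y * a)⁻¹ ∧
    β = -(y ^ 3 * a)⁻¹ - y ^ 3 * a ^ 2 ∧
    τ = a ^ 3 * y ^ 6 + 1 + (a ^ 3 * y ^ 6)⁻¹ := by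
  obtain ⟨hy, ha, hx, hv⟩ := crossing_coeffs_eq h1 h5 h6
  set s := x * v + u * y with hs_def
  have hs : s = (y ^ 3 * a ^ 2)⁻¹ + y ^ 3 * a := by
    rw [hs_def, hx, hv, h5]
    field_simp
  have hβ : β = -a * s := bubble_eq_neg_mul h3 h2
  have hτ : τ = -s * β - 1 := by linear_combination h4 - τ * h1 - h3
  refine ⟨hy, ha, hx, h5, hv, ?_, ?_⟩
  · rw [hβ, hs]
    field_simp
    ring
  · rw [hτ, hβ, hs]
    field_simp
    ring
end
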